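/- Let m ≥ 1 be an integer, c ≤ 0 a real number, and β ≥ 0. Then Σ_{n∈ℕ^m} (Π_{i=1}^m β^{n_i}/n_i!) · exp(c · n_1 n_2 ⋯ n_m) ≥ exp(β(m−1)). -/

import Mathlib

/-!
Keeping only the multi-indices with `n₀ = 0` kills the damping factor `exp (c * n₀ ⋯ nₘ₋₁)`,
and the remaining `m - 1` free indices sum to `(∑ βʲ / j!) ^ (m - 1) = exp (β (m - 1))`.
-/

theorem hasSum_fin_pi_prod {α : Type*} {f : α → ℝ} {s : ℝ} (hf : HasSum f s) (hf0 : 0 ≤ f)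
    (k : ℕ) : HasSum (fun n : Fin k → α => ∏ i, f (n i)) (s ^ k) := by
  induction k with
  | zero => simp
  | succ k ih =>
    have hg0 : 0 ≤ fun n : Fin k → α => ∏ i, f (n i) := fun n =>
      Finset.prod_nonneg fun i _ => hf0 _
    have hfg := Summable.mul_of_nonneg hf.summable ih.summable hf0 hg0
    have hprod := hf.mul ih hfg
    have hcons : (fun n : Fin (k + 1) → α => ∏ i, f (n i)) ∘ Fin.consEquiv (fun _ => α) =
        fun p => f p.1 * ∏ i, f (p.2 i) := by
      funext p
      simp [Fin.prod_univ_succ, Fin.consEquiv]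
    rw [pow_succ', ← (Fin.consEquiv fun _ => α).hasSum_iff, hcons]
    exact hprod

theorem hasSum_pow_div_factorial (β : ℝ) :
    HasSum (fun j : ℕ => β ^ j / (j.factorial : ℝ)) (Real.exp β) := by
  rw [Real.exp_eq_exp_ℝ]
  exact NormedSpace.expSeries_div_hasSum_exp β

/-- The product-exponent series is bounded below by `exp(β(m-1))`. -/
theorem product_exponent_series_lower_bound
    (m : ℕ) (hm : 1 ≤ m) (c : ℝ) (hc : c ≤ 0) (β : ℝ) (hβ : 0 ≤ β) :
    Real.exp (β * ((m : ℝ) - 1)) ≤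
      ∑' n : Fin m → ℕ,
        (∏ i, β ^ (n i) / ((n i).factorial : ℝ)) *
          Real.exp (c * ∏ i, (n i : ℝ)) := by
  obtain ⟨k, rfl⟩ := Nat.exists_eq_add_of_le' hm
  set w : ℕ → ℝ := fun j => β ^ j / (j.factorial : ℝ)
  set F : (Fin (k + 1) → ℕ) → ℝ := fun n => (∏ i, w (n i)) * Real.exp (c * ∏ i, (n i : ℝ))
  have hw0 : 0 ≤ w := fun j => by positivity
  have hweight (j : ℕ) := hasSum_fin_pi_prod (hasSum_pow_div_factorial β) hw0 j
  have hF0 : 0 ≤ F := fun n => by positivity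
  have hF : Summable F := (hweight (k + 1)).summable.of_nonneg_of_le hF0 fun n =>
    mul_le_of_le_one_right (by positivity) <|
      Real.exp_le_one_iff.2 <| mul_nonpos_of_nonpos_of_nonneg hc <| by positivity
  have hcons : Function.Injective (Fin.cons (α := fun _ => ℕ) 0 : (Fin k → ℕ) → _) :=
    Fin.cons_right_injective 0
  calc Real.exp (β * (((k + 1 : ℕ) : ℝ) - 1)) = Real.exp β ^ k := by
        rw [← Real.exp_nat_mul]; push_cast; ring_nf
    _ = ∑' n : Fin k → ℕ, ∏ i, w (n i) := (hweight k).tsum_eq.symm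
    _ = ∑' n : Fin k → ℕ, F (Fin.cons 0 n) :=
        tsum_congr fun n => by simp [Fin.prod_univ_succ, F, w]
    _ ≤ ∑' n, F n := tsum_comp_le_tsum_of_inj hF hF0 hcons
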